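/- arXiv:1001.3859 — 7 statements merged into one kernel-verified Lean document; each statement's English description precedes it below -/
import Mathlib

section
/- Monotonicity of Algorithm II for m ≥ 2: assume m ≥ 2, each x_i = (1, z_iᵀ)ᵀ with z_i ∈ ℝ^{m−1}, and X has full rank m. If w, w' ∈ Ω₊ are related by the Algorithm II update, i.e. w'_i = w_i·(x_iᵀ M(w)^{-1} x_i − 1)/(m − 1) for every i, then det M(w) ≤ det M(w'). -/
/-
Write `x̄ = ∑ wᵢ xᵢ`, `dᵢ = xᵢ - x̄` and `e` for the unit vector of the constant coordinate.
Because every design point has constant coordinate `1`, a shear of determinant one carries `M(w)`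
to `N(w) = ∑ wᵢ dᵢ dᵢᵀ + e eᵀ`; hence `det M(w) = det N(w)`,
`xᵢᵀ M(w)⁻¹ xᵢ - 1 = dᵢᵀ N(w)⁻¹ dᵢ =: qᵢ(w)`, `∑ wᵢ qᵢ(w) = m - 1`, and the update reads
`w'ᵢ = wᵢ qᵢ(w) / (m - 1)`. Since `∑ wᵢ dᵢ = 0`, also `N(w) = e eᵀ + ∑ wᵢ dᵢ(w) dᵢ(w')ᵀ`.
Whitening `N(w)` and `N(w')` simultaneously turns this into a positive semidefinite `Z` with
`det Z ^ 2 = det N(w) / det N(w')` whose trace is, by Cauchy–Schwarz and AM–GM, at most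
`1 + ∑ wᵢ √(qᵢ(w) qᵢ(w')) ≤ m`; AM–GM for the eigenvalues of `Z` then gives `det Z ≤ 1`.
-/

open Matrix Filter

/-- The information matrix `M(w) = ∑ i, w_i x_i x_iᵀ`. -/
noncomputable def Mmat {n m : ℕ} (x : Fin n → Fin m → ℝ) (w : Fin n → ℝ) :
    Matrix (Fin m) (Fin m) ℝ :=
  ∑ i, w i • Matrix.vecMulVec (x i) (x i)

open scoped MatrixOrder

section VecMulVec

variable {R ι κ : Type*} [CommSemiring R] [Fintype ι]

theorem sum_smul_vecMulVec_left (c : ι → R) (u : ι → κ → R) (v : κ → R) :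
    ∑ i, c i • vecMulVec (u i) v = vecMulVec (∑ i, c i • u i) v := by
  ext a b
  simp [vecMulVec_apply, Matrix.sum_apply, Finset.sum_apply, Finset.sum_mul, mul_assoc]

theorem sum_smul_vecMulVec_right (c : ι → R) (v : κ → R) (u : ι → κ → R) :
    ∑ i, c i • vecMulVec v (u i) = vecMulVec v (∑ i, c i • u i) := by
  ext a b
  simp [vecMulVec_apply, Matrix.sum_apply, Finset.sum_apply, Finset.mul_sum, mul_left_comm]

theorem mul_sum_smul_vecMulVec_mul_transpose [Fintype κ] (A : Matrix κ κ R) (c : ι → R)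
    (u : ι → κ → R) :
    A * (∑ i, c i • vecMulVec (u i) (u i)) * Aᵀ = ∑ i, c i • vecMulVec (A *ᵥ u i) (A *ᵥ u i) := by
  simp only [Matrix.mul_sum, Matrix.sum_mul, Matrix.mul_smul, Matrix.smul_mul, mul_vecMulVec,
    vecMulVec_mul, vecMul_transpose]

end VecMulVec

theorem dotProduct_mul_mul_transpose_inv_mulVec {R ι : Type*} [CommRing R] [Fintype ι]
    [DecidableEq ι] {L : Matrix ι ι R} (hL : IsUnit L.det) (A : Matrix ι ι R) (v : ι → R) :
    (L *ᵥ v) ⬝ᵥ (L * A * Lᵀ)⁻¹ *ᵥ (L *ᵥ v) = v ⬝ᵥ A⁻¹ *ᵥ v := by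
  have hv : L⁻¹ *ᵥ (L *ᵥ v) = v := by rw [mulVec_mulVec, nonsing_inv_mul _ hL, one_mulVec]
  rw [Matrix.mul_inv_rev, Matrix.mul_inv_rev, ← mulVec_mulVec, ← mulVec_mulVec, hv,
    dotProduct_mulVec, ← mulVec_transpose, transpose_nonsing_inv, transpose_transpose, hv]

section Whitening

variable {ι : Type*} [Fintype ι] [DecidableEq ι]

theorem Matrix.PosSemidef.det_le_one_of_trace_le {Z : Matrix ι ι ℝ} (hZ : Z.PosSemidef)
    (h : Z.trace ≤ Fintype.card ι) : Z.det ≤ 1 := by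
  rw [hZ.1.trace_eq_sum_eigenvalues] at h
  rw [hZ.1.det_eq_prod_eigenvalues]
  calc ∏ i, (hZ.1.eigenvalues i : ℝ) ≤ ∏ i, Real.exp (hZ.1.eigenvalues i - 1) :=
        Finset.prod_le_prod (fun i _ => hZ.eigenvalues_nonneg i)
          (fun i _ => by linarith [Real.add_one_le_exp (hZ.1.eigenvalues i - 1)])
    _ = Real.exp (∑ i, hZ.1.eigenvalues i - Fintype.card ι) := by
        simp [← Real.exp_sum, Finset.sum_sub_distrib]
    _ ≤ 1 := Real.exp_le_one_iff.mpr (by simpa using h)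

theorem Matrix.PosDef.exists_whitening_posSemidef_cross {N N' : Matrix ι ι ℝ} (hN : N.PosDef)
    (hN' : N'.PosDef) :
    ∃ E F : Matrix ι ι ℝ, Eᵀ * E = N⁻¹ ∧ Fᵀ * F = N'⁻¹ ∧ (E * N * Fᵀ).PosSemidef := by
  -- `F` is any square root of `N'⁻¹`; with `Z = (F N Fᵀ) ^ (1/2)`, the choice `E = Z⁻¹ F` makes
  -- the cross term `E N Fᵀ` equal to `Z`.
  obtain ⟨F, hF⟩ := CStarAlgebra.nonneg_iff_eq_star_mul_self.mp hN'.inv.posSemidef.nonneg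
  rw [star_eq_conjTranspose, conjTranspose_eq_transpose_of_trivial] at hF
  have hFu : IsUnit F := by
    have := hN'.inv.isUnit
    rw [hF] at this
    exact isUnit_of_mul_isUnit_right this
  have hT : (F * N * Fᵀ).PosDef := by
    simpa [star_eq_conjTranspose] using (IsUnit.posDef_star_right_conjugate_iff hFu).mpr hN
  set Z := CFC.sqrt (F * N * Fᵀ)
  have hZZ : Z * Z = F * N * Fᵀ := CFC.sqrt_mul_sqrt_self _ hT.posSemidef.nonneg
  have hZ : Z.PosSemidef := (CFC.sqrt_nonneg _).posSemidef
  have hZu : IsUnit Z := isUnit_of_mul_isUnit_right (hZZ ▸ hT.isUnit)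
  have hZT : Zᵀ = Z := by simpa using hZ.1.eq
  refine ⟨Z⁻¹ * F, F, ?_, hF.symm, ?_⟩
  · have hFd : IsUnit F.det := (isUnit_iff_isUnit_det F).mp hFu
    have hFTd : IsUnit Fᵀ.det := by rwa [det_transpose]
    calc (Z⁻¹ * F)ᵀ * (Z⁻¹ * F) = Fᵀ * (Z * Z)⁻¹ * F := by
          rw [transpose_mul, transpose_nonsing_inv, hZT, mul_inv_rev]; simp only [Matrix.mul_assoc]
      _ = N⁻¹ := by
          rw [hZZ, mul_inv_rev, mul_inv_rev, Matrix.mul_assoc, Matrix.mul_assoc,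
            nonsing_inv_mul_cancel_right _ _ hFd, mul_nonsing_inv_cancel_left _ _ hFTd]
  · rw [Matrix.mul_assoc, Matrix.mul_assoc, ← Matrix.mul_assoc F, ← hZZ,
      nonsing_inv_mul_cancel_left _ _ ((isUnit_iff_isUnit_det Z).mp hZu)]
    exact hZ

theorem det_le_det_of_sum_mul_sqrt_le {J : Type*} [Fintype J] {N N' : Matrix ι ι ℝ}
    (hN : N.PosDef) (hN' : N'.PosDef) (c : J → ℝ) (p p' : J → ι → ℝ) (hc : ∀ j, 0 ≤ c j)
    (hNp : N = ∑ j, c j • vecMulVec (p j) (p' j))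
    (hsum : ∑ j, c j * √((p j ⬝ᵥ N⁻¹ *ᵥ p j) * (p' j ⬝ᵥ N'⁻¹ *ᵥ p' j)) ≤ Fintype.card ι) :
    N.det ≤ N'.det := by
  obtain ⟨E, F, hE, hF, hZ⟩ := hN.exists_whitening_posSemidef_cross hN'
  have hquad : ∀ (A : Matrix ι ι ℝ) (v : ι → ℝ), (A *ᵥ v) ⬝ᵥ (A *ᵥ v) = v ⬝ᵥ (Aᵀ * A) *ᵥ v := by
    intro A v
    rw [← mulVec_mulVec, dotProduct_mulVec, ← mulVec_transpose, dotProduct_comm]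
  have htrace : (E * N * Fᵀ).trace = ∑ j, c j * ((E *ᵥ p j) ⬝ᵥ (F *ᵥ p' j)) := by
    simp only [hNp, Matrix.mul_sum, Matrix.sum_mul, trace_sum, Matrix.mul_smul, Matrix.smul_mul,
      trace_smul, mul_vecMulVec, vecMulVec_mul, trace_vecMulVec, smul_eq_mul, vecMul_transpose]
  have hCS : ∀ j, (E *ᵥ p j) ⬝ᵥ (F *ᵥ p' j) ≤ √((p j ⬝ᵥ N⁻¹ *ᵥ p j) * (p' j ⬝ᵥ N'⁻¹ *ᵥ p' j)) := by
    intro j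
    rw [← hE, ← hF, ← hquad, ← hquad,
      Real.sqrt_mul (by simpa using dotProduct_star_self_nonneg (E *ᵥ p j))]
    simpa [dotProduct, pow_two] using
      Real.sum_mul_le_sqrt_mul_sqrt Finset.univ (E *ᵥ p j) (F *ᵥ p' j)
  have hZ1 : (E * N * Fᵀ).det ≤ 1 := hZ.det_le_one_of_trace_le <| by
    rw [htrace]
    exact (Finset.sum_le_sum fun j _ => mul_le_mul_of_nonneg_left (hCS j) (hc j)).trans hsum
  have hdet : (E * N * Fᵀ).det ^ 2 * N'.det = N.det := by
    have hdetE : E.det ^ 2 * N.det = 1 := by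
      have := congrArg det hE
      rw [det_mul, det_transpose, det_nonsing_inv, Ring.inverse_eq_inv'] at this
      rw [sq, this, inv_mul_cancel₀ hN.det_pos.ne']
    have hdetF : F.det ^ 2 * N'.det = 1 := by
      have := congrArg det hF
      rw [det_mul, det_transpose, det_nonsing_inv, Ring.inverse_eq_inv'] at this
      rw [sq, this, inv_mul_cancel₀ hN'.det_pos.ne']
    rw [det_mul, det_mul, det_transpose]
    linear_combination (N.det * F.det ^ 2 * N'.det) * hdetE + N.det * hdetF
  calc N.det = (E * N * Fᵀ).det ^ 2 * N'.det := hdet.symm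
    _ ≤ 1 * N'.det := by gcongr; exacts [hN'.det_pos.le, pow_le_one₀ hZ.det_nonneg hZ1]
    _ = N'.det := one_mul _

end Whitening

section Centering

variable {n m : ℕ} (x : Fin n → Fin m → ℝ) (k : Fin m) {w : Fin n → ℝ}

noncomputable def weightedMean (w : Fin n → ℝ) : Fin m → ℝ := ∑ i, w i • x i

noncomputable def weightedCov (w : Fin n → ℝ) : Matrix (Fin m) (Fin m) ℝ :=
  ∑ i, w i • vecMulVec (x i - weightedMean x w) (x i - weightedMean x w)

/-- `N(w)`, the information matrix of the recentred points `xᵢ - x̄ + e_k`. -/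
noncomputable def centeredMmat (w : Fin n → ℝ) : Matrix (Fin m) (Fin m) ℝ :=
  weightedCov x w + vecMulVec (Pi.single k 1) (Pi.single k 1)

noncomputable def centering (w : Fin n → ℝ) : Matrix (Fin m) (Fin m) ℝ :=
  1 - vecMulVec (weightedMean x w - Pi.single k 1) (Pi.single k 1)

theorem sum_smul_sub_weightedMean (hw1 : ∑ i, w i = 1) :
    ∑ i, w i • (x i - weightedMean x w) = 0 := by
  simp [weightedMean, smul_sub, Finset.sum_sub_distrib, ← Finset.sum_smul, hw1]

theorem sum_smul_vecMulVec_sub_weightedMean (hw1 : ∑ i, w i = 1) (y : Fin m → ℝ) :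
    ∑ i, w i • vecMulVec (x i - weightedMean x w) (x i - y) = weightedCov x w := by
  have hsplit : ∀ i, x i - y = (x i - weightedMean x w) + (weightedMean x w - y) :=
    fun i => by abel
  simp only [hsplit, vecMulVec_add, smul_add, Finset.sum_add_distrib, weightedCov, add_eq_left,
    sum_smul_vecMulVec_left, sum_smul_sub_weightedMean x hw1, zero_vecMulVec]

variable {x k}

theorem weightedMean_apply_eq_one (hk : ∀ i, x i k = 1) (hw1 : ∑ i, w i = 1) :
    weightedMean x w k = 1 := by
  simp [weightedMean, Finset.sum_apply, hk, hw1]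

theorem centering_mulVec (hk : ∀ i, x i k = 1) (i : Fin n) :
    centering x k w *ᵥ x i = x i - weightedMean x w + Pi.single k 1 := by
  rw [centering, sub_mulVec, one_mulVec, vecMulVec_mulVec, single_one_dotProduct, hk,
    op_smul_eq_smul, one_smul]
  abel

theorem det_centering (hk : ∀ i, x i k = 1) (hw1 : ∑ i, w i = 1) :
    (centering x k w).det = 1 := by
  rw [centering, sub_eq_add_neg, ← neg_vecMulVec, vecMulVec_eq Unit,
    det_one_add_replicateCol_mul_replicateRow]
  simp [weightedMean_apply_eq_one hk hw1]

theorem centeredMmat_mulVec_single (hk : ∀ i, x i k = 1) (hw1 : ∑ i, w i = 1) :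
    centeredMmat x k w *ᵥ Pi.single k 1 = Pi.single k 1 := by
  rw [centeredMmat, weightedCov, add_mulVec, sum_mulVec]
  simp only [smul_mulVec, vecMulVec_mulVec, dotProduct_single_one, op_smul_eq_smul, Pi.sub_apply,
    hk, weightedMean_apply_eq_one hk hw1, sub_self, zero_smul, smul_zero, Finset.sum_const_zero,
    Pi.single_eq_same, one_smul, zero_add]

theorem centering_mul_Mmat_mul_transpose (hk : ∀ i, x i k = 1) (hw1 : ∑ i, w i = 1) :
    centering x k w * Mmat x w * (centering x k w)ᵀ = centeredMmat x k w := by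
  rw [Mmat, mul_sum_smul_vecMulVec_mul_transpose]
  simp only [centering_mulVec hk, vecMulVec_add, add_vecMulVec, smul_add, Finset.sum_add_distrib,
    sum_smul_vecMulVec_left, sum_smul_vecMulVec_right, sum_smul_sub_weightedMean x hw1,
    zero_vecMulVec, vecMulVec_zero, ← Finset.sum_smul, hw1, one_smul, add_zero, zero_add,
    centeredMmat, weightedCov]

theorem det_centeredMmat (hk : ∀ i, x i k = 1) (hw1 : ∑ i, w i = 1) :
    (centeredMmat x k w).det = (Mmat x w).det := by
  rw [← centering_mul_Mmat_mul_transpose hk hw1, det_mul, det_mul, det_transpose,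
    det_centering hk hw1, one_mul, mul_one]

theorem posDef_centeredMmat (hk : ∀ i, x i k = 1) (hw1 : ∑ i, w i = 1) (hM : (Mmat x w).PosDef) :
    (centeredMmat x k w).PosDef := by
  have hL : IsUnit (centering x k w) := by
    rw [isUnit_iff_isUnit_det, det_centering hk hw1]
    exact isUnit_one
  rw [← centering_mul_Mmat_mul_transpose hk hw1]
  simpa [star_eq_conjTranspose] using (IsUnit.posDef_star_right_conjugate_iff hL).mpr hM

theorem centeredMmat_inv_mulVec_single (hk : ∀ i, x i k = 1) (hw1 : ∑ i, w i = 1)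
    (hM : (Mmat x w).PosDef) :
    (centeredMmat x k w)⁻¹ *ᵥ Pi.single k 1 = Pi.single k 1 := by
  conv_lhs => rw [← centeredMmat_mulVec_single hk hw1]
  rw [mulVec_mulVec, nonsing_inv_mul _ (posDef_centeredMmat hk hw1 hM).det_pos.ne'.isUnit,
    one_mulVec]

theorem dotProduct_Mmat_inv_mulVec (hk : ∀ i, x i k = 1) (hw1 : ∑ i, w i = 1)
    (hM : (Mmat x w).PosDef) (i : Fin n) :
    x i ⬝ᵥ (Mmat x w)⁻¹ *ᵥ x i = 1 + (x i - weightedMean x w) ⬝ᵥ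
      (centeredMmat x k w)⁻¹ *ᵥ (x i - weightedMean x w) := by
  have hL : IsUnit (centering x k w).det := by rw [det_centering hk hw1]; exact isUnit_one
  rw [← dotProduct_mul_mul_transpose_inv_mulVec hL, centering_mul_Mmat_mul_transpose hk hw1,
    centering_mulVec hk]
  set d := x i - weightedMean x w
  set N := centeredMmat x k w
  have hdk : d k = 0 := by simp [d, hk, weightedMean_apply_eq_one hk hw1]
  have hNe := centeredMmat_inv_mulVec_single hk hw1 hM
  have hNT : N⁻¹ᵀ = N⁻¹ := by
    simpa using (posDef_centeredMmat hk hw1 hM).inv.1.eq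
  have heN : Pi.single k 1 ᵥ* N⁻¹ = Pi.single k 1 := by rw [← mulVec_transpose, hNT, hNe]
  rw [mulVec_add, dotProduct_add, add_dotProduct, add_dotProduct, hNe,
    dotProduct_mulVec (Pi.single k 1), heN, dotProduct_single_one, single_one_dotProduct, hdk,
    single_one_dotProduct, Pi.single_eq_same]
  ring

theorem sum_mul_dotProduct_centeredMmat_inv_mulVec (hk : ∀ i, x i k = 1) (hw1 : ∑ i, w i = 1)
    (hM : (Mmat x w).PosDef) :
    ∑ i, w i * ((x i - weightedMean x w) ⬝ᵥ
      (centeredMmat x k w)⁻¹ *ᵥ (x i - weightedMean x w)) = m - 1 := by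
  set N := centeredMmat x k w
  have htrace : ∑ i, w i * ((x i - weightedMean x w) ⬝ᵥ N⁻¹ *ᵥ (x i - weightedMean x w)) =
      (N⁻¹ * weightedCov x w).trace := by
    simp [weightedCov, Matrix.mul_sum, trace_sum, mul_vecMulVec, trace_vecMulVec, dotProduct_comm]
  have hcov : weightedCov x w = N - vecMulVec (Pi.single k 1) (Pi.single k 1) := by
    simp [N, centeredMmat]
  rw [htrace, hcov, Matrix.mul_sub, trace_sub,
    nonsing_inv_mul _ (posDef_centeredMmat hk hw1 hM).det_pos.ne'.isUnit, trace_one,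
    mul_vecMulVec, trace_vecMulVec, centeredMmat_inv_mulVec_single hk hw1 hM, single_one_dotProduct]
  simp

end Centering

theorem sum_mul_sqrt_mul_le {ι : Type*} [Fintype ι] {s : ℝ} {w w' q q' : ι → ℝ}
    (hs : 0 ≤ s) (hw : ∀ i, 0 ≤ w i) (hw' : ∀ i, 0 ≤ w' i) (hq' : ∀ i, 0 ≤ q' i)
    (hwq : ∀ i, w i * q i = s * w' i) (hw1 : ∑ i, w i = 1) (hw'q' : ∑ i, w' i * q' i = s) :
    ∑ i, w i * √(q i * q' i) ≤ s := by
  have hterm : ∀ i, 2 * (w i * √(q i * q' i)) ≤ s * w i + w' i * q' i := by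
    intro i
    have hsw : 0 ≤ s * w i := mul_nonneg hs (hw i)
    have hwq' : 0 ≤ w' i * q' i := mul_nonneg (hw' i) (hq' i)
    have hsplit : w i * √(q i * q' i) = √(s * w i) * √(w' i * q' i) := by
      rw [← Real.sqrt_mul hsw, ← Real.sqrt_sq (hw i), ← Real.sqrt_mul (sq_nonneg _),
        Real.sqrt_sq (hw i)]
      congr 1
      linear_combination (w i * q' i) * hwq i
    rw [hsplit]
    nlinarith [two_mul_le_add_sq (√(s * w i)) (√(w' i * q' i)), Real.sq_sqrt hsw, Real.sq_sqrt hwq']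
  have hsum := Finset.sum_le_sum fun i (_ : i ∈ Finset.univ) => hterm i
  rw [← Finset.mul_sum, Finset.sum_add_distrib, ← Finset.mul_sum, hw1, hw'q'] at hsum
  linarith

/-- Monotonicity of Titterington's Algorithm II for `m ≥ 2`: if each design point has first
coordinate 1, the design matrix has full rank `m`, and `w, w' ∈ Ω₊` are related by the
Algorithm II update, then `det M(w) ≤ det M(w')`. -/
theorem stmt_1 {n m : ℕ} (hm : 2 ≤ m)
    (x : Fin n → Fin m → ℝ)
    (hx1 : ∀ i, x i ⟨0, by omega⟩ = 1)
    (w w' : Fin n → ℝ)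
    (hw0 : ∀ i, 0 ≤ w i) (hw1 : ∑ i, w i = 1) (hMw : (Mmat x w).PosDef)
    (hw'0 : ∀ i, 0 ≤ w' i) (hw'1 : ∑ i, w' i = 1) (hMw' : (Mmat x w').PosDef)
    (hupd : ∀ i, w' i = w i * ((x i ⬝ᵥ (Mmat x w)⁻¹ *ᵥ x i) - 1) / ((m : ℝ) - 1)) :
    (Mmat x w).det ≤ (Mmat x w').det := by
  set k : Fin m := ⟨0, by omega⟩
  have hm1 : (0 : ℝ) < m - 1 := by linarith [show (2 : ℝ) ≤ m by exact_mod_cast hm]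
  set d : (Fin n → ℝ) → Fin n → Fin m → ℝ := fun v i => x i - weightedMean x v
  set q : (Fin n → ℝ) → Fin n → ℝ :=
    fun v i => d v i ⬝ᵥ (centeredMmat x k v)⁻¹ *ᵥ d v i
  have hN := posDef_centeredMmat hx1 hw1 hMw
  have hN' := posDef_centeredMmat hx1 hw'1 hMw'
  have hwq : ∀ i, w i * q w i = (m - 1) * w' i := by
    intro i
    rw [hupd i, dotProduct_Mmat_inv_mulVec hx1 hw1 hMw i]
    simp only [q, d]
    field_simp [hm1.ne']
    ring
  have hbound : ∑ i, w i * √(q w i * q w' i) ≤ m - 1 :=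
    sum_mul_sqrt_mul_le hm1.le hw0 hw'0
      (fun i => by simpa using hN'.inv.posSemidef.dotProduct_mulVec_nonneg (d w' i)) hwq hw1
      (sum_mul_dotProduct_centeredMmat_inv_mulVec hx1 hw'1 hMw')
  rw [← det_centeredMmat hx1 hw1, ← det_centeredMmat hx1 hw'1]
  refine det_le_det_of_sum_mul_sqrt_le (J := Option (Fin n)) hN hN' (fun j => j.elim 1 w)
    (fun j => j.elim (Pi.single k 1) (d w)) (fun j => j.elim (Pi.single k 1) (d w'))
    (fun j => j.rec zero_le_one hw0) ?_ ?_
  · simp [Fintype.sum_option, d, sum_smul_vecMulVec_sub_weightedMean x hw1, centeredMmat, add_comm]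
  · simp [Fintype.sum_option, centeredMmat_inv_mulVec_single hx1 hw1 hMw,
      centeredMmat_inv_mulVec_single hx1 hw'1 hMw']
    linarith
end

section
/- Formula for the matrix rate of convergence: with w* ∈ Ω such that M(w*) is positive definite, the Jacobian R(α) = ∂T_α(w)/∂w evaluated at w = w* has entries R_ij(α) = −w*_i d_ij² / (m − α) for i ≠ j, and R_ii(α) = (d_ii − w*_i d_ii² − α)/(m − α) for the diagonal entries, where d_ij = x_iᵀ M(w*)^{-1} x_j. -/
/-!
`T_α(w) = (m - α)⁻¹ • (w * (q(w) - α))` with `q(w)_i = x_iᵀ M(w)⁻¹ x_i`, so by the product rule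
the Jacobian is `(m - α)⁻¹ • (diag(q(w*) - α) + diag(w*) Q)` with `Q` the Jacobian of `q`.
Since `M` is linear in `w` and `d(M⁻¹) = -M⁻¹ (dM) M⁻¹`, the derivative of `q_i` in direction `v`
is `-∑_j v_j (x_iᵀ M⁻¹ x_j)(x_jᵀ M⁻¹ x_i) = -∑_j v_j d_ij²`, the last step by symmetry of `M⁻¹`.
-/

open Matrix Filter

/-- The multiplicative update map `T_α(w)_i = w_i (x_iᵀ M(w)⁻¹ x_i − α)/(m − α)`. -/
noncomputable def Talg {n m : ℕ} (x : Fin n → Fin m → ℝ) (α : ℝ) (w : Fin n → ℝ) :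
    Fin n → ℝ :=
  fun i => w i * ((x i ⬝ᵥ (Mmat x w)⁻¹ *ᵥ x i) - α) / ((m : ℝ) - α)

-- Matrices carry no global norm; all norms on them are equivalent, so any one will do.
attribute [local instance] Matrix.linftyOpNormedRing Matrix.linftyOpNormedAlgebra

namespace Matrix

variable {ι κ : Type*} [Fintype ι] [Fintype κ]

theorem dotProduct_mul_vecMulVec_mul_mulVec {R : Type*} [CommSemiring R]
    (N P : Matrix κ κ R) (a b c e : κ → R) :
    a ⬝ᵥ (N * vecMulVec b c * P) *ᵥ e = (a ⬝ᵥ N *ᵥ b) * (c ⬝ᵥ P *ᵥ e) := by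
  rw [← mulVec_mulVec, ← mulVec_mulVec, vecMulVec_mulVec, mulVec_smul, dotProduct_smul]
  simp

theorem IsSymm.dotProduct_mulVec_comm {R : Type*} [CommSemiring R] {N : Matrix κ κ R}
    (hN : N.IsSymm) (a b : κ → R) : a ⬝ᵥ N *ᵥ b = b ⬝ᵥ N *ᵥ a := by
  rw [dotProduct_mulVec, ← mulVec_transpose, hN.eq, dotProduct_comm]

theorem hasFDerivAt_inv {𝕜 : Type*} [RCLike 𝕜] [DecidableEq κ] {A : Matrix κ κ 𝕜}
    (hA : IsUnit A) :
    HasFDerivAt (fun B : Matrix κ κ 𝕜 => B⁻¹)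
      (-ContinuousLinearMap.mulLeftRight 𝕜 _ A⁻¹ A⁻¹) A := by
  have h := hasFDerivAt_ringInverse (𝕜 := 𝕜) hA.unit
  rw [coe_units_inv, hA.unit_spec] at h
  rwa [show (fun B : Matrix κ κ 𝕜 => B⁻¹) = Ring.inverse from funext nonsing_inv_eq_ringInverse]

theorem hasFDerivAt_id_mul_toLin' {𝕜 : Type*} [NontriviallyNormedField 𝕜] [CompleteSpace 𝕜]
    [DecidableEq ι] {g : (ι → 𝕜) → ι → 𝕜} {G : Matrix ι ι 𝕜} {w : ι → 𝕜}
    (hg : HasFDerivAt g (toLin' G).toContinuousLinearMap w) :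
    HasFDerivAt (fun v => v * g v)
      (toLin' (diagonal (g w) + diagonal w * G)).toContinuousLinearMap w := by
  refine ((hasFDerivAt_id w).mul hg).congr_fderiv ?_
  ext v i
  change w i * (G *ᵥ v) i + g w i * v i = ((diagonal (g w) + diagonal w * G) *ᵥ v) i
  rw [add_mulVec, ← mulVec_mulVec, Pi.add_apply, mulVec_diagonal, mulVec_diagonal, add_comm]

def quadFormsₗ {R : Type*} [CommSemiring R] (x : ι → κ → R) : Matrix κ κ R →ₗ[R] ι → R where
  toFun N i := x i ⬝ᵥ N *ᵥ x i
  map_add' A B := by ext i; simp [add_mulVec]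
  map_smul' c A := by ext i; simp [smul_mulVec]

end Matrix

section InformationMatrix

variable {n m : ℕ} (x : Fin n → Fin m → ℝ)

theorem isSymm_Mmat (w : Fin n → ℝ) : (Mmat x w).IsSymm :=
  IsSymm.ext fun k l => by simp [Mmat, Matrix.sum_apply, vecMulVec_apply, mul_comm]

theorem Mmat_eq_linearCombination :
    Mmat x = Fintype.linearCombination ℝ fun i => vecMulVec (x i) (x i) := by
  funext w
  simp [Mmat, Fintype.linearCombination_apply]

theorem hasFDerivAt_Mmat (w : Fin n → ℝ) :
    HasFDerivAt (Mmat x)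
      (Fintype.linearCombination ℝ fun i => vecMulVec (x i) (x i)).toContinuousLinearMap w := by
  rw [Mmat_eq_linearCombination]
  exact (LinearMap.toContinuousLinearMap _).hasFDerivAt

theorem dotProduct_mul_Mmat_mul_mulVec (v : Fin n → ℝ) {N : Matrix (Fin m) (Fin m) ℝ}
    (hN : N.IsSymm) (a : Fin m → ℝ) :
    a ⬝ᵥ (N * Mmat x v * N) *ᵥ a = ∑ j, v j * (a ⬝ᵥ N *ᵥ x j) ^ 2 := by
  simp only [Mmat, Finset.mul_sum, Finset.sum_mul, sum_mulVec, dotProduct_sum, Matrix.mul_smul,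
    Matrix.smul_mul, smul_mulVec, dotProduct_smul, dotProduct_mul_vecMulVec_mul_mulVec,
    hN.dotProduct_mulVec_comm (x _) a, smul_eq_mul, sq]

theorem hasFDerivAt_quadForms_inv_Mmat {w : Fin n → ℝ} (hw : IsUnit (Mmat x w)) :
    HasFDerivAt (fun v i => x i ⬝ᵥ (Mmat x v)⁻¹ *ᵥ x i)
      (toLin' (of fun i j => -(x i ⬝ᵥ (Mmat x w)⁻¹ *ᵥ x j) ^ 2)).toContinuousLinearMap w := by
  have hchain := (quadFormsₗ x).toContinuousLinearMap.hasFDerivAt.comp w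
    ((hasFDerivAt_inv hw).comp w (hasFDerivAt_Mmat x w))
  refine hchain.congr_fderiv (ContinuousLinearMap.ext fun v => funext fun i => ?_)
  change quadFormsₗ x (-((Mmat x w)⁻¹ *
    Fintype.linearCombination ℝ (fun j => vecMulVec (x j) (x j)) v * (Mmat x w)⁻¹)) i = _
  rw [← Mmat_eq_linearCombination]
  simp only [quadFormsₗ, LinearMap.coe_mk, AddHom.coe_mk, neg_mulVec, dotProduct_neg,
    dotProduct_mul_Mmat_mul_mulVec x v (isSymm_Mmat x w).inv,
    LinearMap.coe_toContinuousLinearMap', toLin'_apply]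
  simp [mulVec, dotProduct, mul_comm]

end InformationMatrix

theorem stmt_3_general {n m : ℕ} (x : Fin n → Fin m → ℝ) (α : ℝ) (wstar : Fin n → ℝ)
    (hM : (Mmat x wstar).PosDef)
    (d : Fin n → Fin n → ℝ)
    (hd : ∀ i j, d i j = x i ⬝ᵥ (Mmat x wstar)⁻¹ *ᵥ x j)
    (R : Matrix (Fin n) (Fin n) ℝ)
    (hR : R = Matrix.of fun i j =>
      if i = j then (d i i - wstar i * (d i i) ^ 2 - α) / ((m : ℝ) - α)
      else -(wstar i * (d i j) ^ 2) / ((m : ℝ) - α)) :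
    HasFDerivAt (Talg x α)
      (LinearMap.toContinuousLinearMap (Matrix.toLin' R)) wstar := by
  have hTalg : Talg x α = fun w => ((m : ℝ) - α)⁻¹ •
      (w * ((fun i => x i ⬝ᵥ (Mmat x w)⁻¹ *ᵥ x i) - fun _ => α)) := by
    funext w i
    simp only [Talg, Pi.smul_apply, Pi.mul_apply, Pi.sub_apply, smul_eq_mul]
    ring
  have hRdecomp : R = ((m : ℝ) - α)⁻¹ •
      (diagonal (fun i => d i i - α) + diagonal wstar * of fun i j => -d i j ^ 2) := by
    ext i j
    rcases eq_or_ne i j with rfl | hij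
    · simp only [hR, of_apply, if_pos, Matrix.smul_apply, Matrix.add_apply, diagonal_apply_eq,
        diagonal_mul, smul_eq_mul]
      ring
    · simp only [hR, of_apply, if_neg hij, Matrix.smul_apply, Matrix.add_apply,
        diagonal_apply_ne _ hij, diagonal_mul, smul_eq_mul]
      ring
  have hderiv := (hasFDerivAt_id_mul_toLin'
    ((hasFDerivAt_quadForms_inv_Mmat x hM.isUnit).sub_const fun _ => α)).const_smul
      ((m : ℝ) - α)⁻¹
  simp only [← hd] at hderiv
  rw [hTalg, hRdecomp, map_smul, map_smul]
  exact hderiv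

/-- Formula for the matrix rate of convergence: the Jacobian `R(α)` of `T_α` at an interior
point `w*` with `M(w*)` positive definite has entries `R_ij = −w*_i d_ij²/(m−α)` for `i ≠ j`
and `R_ii = (d_ii − w*_i d_ii² − α)/(m−α)`, where `d_ij = x_iᵀ M(w*)⁻¹ x_j`. -/
theorem stmt_3 {n m : ℕ} (hm : 2 ≤ m) (hnm : m ≤ n)
    (x : Fin n → Fin m → ℝ) (hrank : (Matrix.of x).rank = m)
    (α : ℝ) (hα0 : 0 ≤ α) (hαm : α < m)
    (wstar : Fin n → ℝ) (hpos : ∀ i, 0 < wstar i) (hsum : ∑ i, wstar i = 1)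
    (hM : (Mmat x wstar).PosDef)
    (d : Fin n → Fin n → ℝ)
    (hd : ∀ i j, d i j = x i ⬝ᵥ (Mmat x wstar)⁻¹ *ᵥ x j)
    (R : Matrix (Fin n) (Fin n) ℝ)
    (hR : R = Matrix.of fun i j =>
      if i = j then (d i i - wstar i * (d i i) ^ 2 - α) / ((m : ℝ) - α)
      else -(wstar i * (d i j) ^ 2) / ((m : ℝ) - α)) :
    HasFDerivAt (Talg x α)
      (LinearMap.toContinuousLinearMap (Matrix.toLin' R)) wstar :=
  stmt_3_general x α wstar hM d hd R hR
end

section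
/- Matrix speed relation: assume 0 ≤ α < m, X has full rank m ≥ 2, and w* ∈ Ω is a global maximizer of det M(w) over Ω̄ with all coordinates positive. Then the n×n identity matrix I satisfies I − R(α) = (m/(m − α))·(I − R(0)), where R(α) is the Jacobian of T_α at w*. -/
open Matrix Filter

/-! `T_α(w) = (m T_0(w) − α w)/(m − α)` is an affine combination of `T_0` and the identity, so the
same holds for the Jacobians, `R(α) = (m R(0) − α I)/(m − α)`, which rearranges to the claim. -/

theorem Talg_eq_smul_sub_smul_id {n m : ℕ} (x : Fin n → Fin m → ℝ) {α : ℝ} (hα : α ≠ m) :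
    Talg x α = ((m : ℝ) / (m - α)) • Talg x 0 - (α / (m - α)) • id := by
  have hma : (m : ℝ) - α ≠ 0 := sub_ne_zero.mpr hα.symm
  funext w i
  simp only [Talg, Pi.sub_apply, Pi.smul_apply, id, smul_eq_mul, sub_zero]
  rcases eq_or_ne m 0 with rfl | hm
  · -- the quadratic forms live on `Fin 0 → ℝ`, so they vanish even though `T_0` divides by `m = 0`
    have hα0 : α ≠ 0 := by simpa using hα
    simp [hα0]
  · field_simp

theorem Matrix.eq_of_hasFDerivAt_toLin' {n : ℕ} {f : (Fin n → ℝ) → Fin n → ℝ} {w : Fin n → ℝ}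
    {A B : Matrix (Fin n) (Fin n) ℝ}
    (hA : HasFDerivAt f (LinearMap.toContinuousLinearMap (Matrix.toLin' A)) w)
    (hB : HasFDerivAt f (LinearMap.toContinuousLinearMap (Matrix.toLin' B)) w) : A = B :=
  Matrix.toLin'.injective (LinearMap.toContinuousLinearMap.injective (hA.unique hB))

theorem HasFDerivAt.smul_sub_smul_id_toLin' {n : ℕ} {g : (Fin n → ℝ) → Fin n → ℝ}
    {w : Fin n → ℝ} {A : Matrix (Fin n) (Fin n) ℝ}
    (hg : HasFDerivAt g (LinearMap.toContinuousLinearMap (Matrix.toLin' A)) w) (c d : ℝ) :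
    HasFDerivAt (c • g - d • id)
      (LinearMap.toContinuousLinearMap (Matrix.toLin' (c • A - d • 1))) w := by
  rw [map_sub, map_smul, map_smul, Matrix.toLin'_one, map_sub, map_smul, map_smul]
  exact (hg.const_smul c).sub ((hasFDerivAt_id w).const_smul d)

theorem stmt_6_general {n m : ℕ}
    (x : Fin n → Fin m → ℝ)
    (α : ℝ) (hαm : α < m)
    (wstar : Fin n → ℝ)
    (Rα R0 : Matrix (Fin n) (Fin n) ℝ)
    (hRα : HasFDerivAt (Talg x α)
      (LinearMap.toContinuousLinearMap (Matrix.toLin' Rα)) wstar)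
    (hR0 : HasFDerivAt (Talg x 0)
      (LinearMap.toContinuousLinearMap (Matrix.toLin' R0)) wstar) :
    (1 : Matrix (Fin n) (Fin n) ℝ) - Rα =
      ((m : ℝ) / ((m : ℝ) - α)) • ((1 : Matrix (Fin n) (Fin n) ℝ) - R0) := by
  set c : ℝ := (m : ℝ) / (m - α)
  set d : ℝ := α / (m - α)
  have hRα_eq : Rα = c • R0 - d • 1 := by
    refine Matrix.eq_of_hasFDerivAt_toLin' hRα ?_
    rw [Talg_eq_smul_sub_smul_id x hαm.ne]
    exact hR0.smul_sub_smul_id_toLin' c d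
  have hcd : 1 + d = c := by
    have hma : (m : ℝ) - α ≠ 0 := (sub_pos.mpr hαm).ne'
    simp only [c, d]
    field_simp
    ring
  rw [hRα_eq]
  linear_combination (norm := module) hcd • (1 : Matrix (Fin n) (Fin n) ℝ)

/-- Matrix speed relation: if `0 ≤ α < m`, the design matrix has full rank `m ≥ 2`, and `w*`
is an interior global maximizer of `det M` over the closed simplex, then
`I − R(α) = (m/(m−α))·(I − R(0))`, where `R(α)` is the Jacobian of `T_α` at `w*`. -/
theorem stmt_6 {n m : ℕ} (hm : 2 ≤ m) (hnm : m ≤ n)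
    (x : Fin n → Fin m → ℝ) (hrank : (Matrix.of x).rank = m)
    (α : ℝ) (hα0 : 0 ≤ α) (hαm : α < m)
    (wstar : Fin n → ℝ) (hpos : ∀ i, 0 < wstar i) (hsum : ∑ i, wstar i = 1)
    (hopt : ∀ v : Fin n → ℝ, (∀ i, 0 ≤ v i) → ∑ i, v i = 1 →
      (Mmat x v).det ≤ (Mmat x wstar).det)
    (Rα R0 : Matrix (Fin n) (Fin n) ℝ)
    (hRα : HasFDerivAt (Talg x α)
      (LinearMap.toContinuousLinearMap (Matrix.toLin' Rα)) wstar)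
    (hR0 : HasFDerivAt (Talg x 0)
      (LinearMap.toContinuousLinearMap (Matrix.toLin' R0)) wstar) :
    (1 : Matrix (Fin n) (Fin n) ℝ) - Rα =
      ((m : ℝ) / ((m : ℝ) - α)) • ((1 : Matrix (Fin n) (Fin n) ℝ) - R0) :=
  stmt_6_general x α hαm wstar Rα R0 hRα hR0
end

section
/- Determinant identity for the centered block: assume each x_i = (1, z_iᵀ)ᵀ with z_i ∈ ℝ^{m−1}, let w ∈ ℝ^n with w_i ≥ 0, Σ_i w_i = 1, and M(w) positive definite, and let K = (0_{m−1}, I_{m−1}) be the (m−1)×m matrix obtained by prepending a zero column to the identity. Then det(K M(w)^{-1} Kᵀ) = 1/det M(w); equivalently, log det(K M(w)^{-1} Kᵀ) = −log det M(w). -/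
open Matrix Filter

/-- The `(m−1) × m` matrix `K = (0_{m−1}, I_{m−1})`: a zero first column followed by the
identity. -/
def Kmat (m : ℕ) : Matrix (Fin (m - 1)) (Fin m) ℝ :=
  Matrix.of fun i j => if (j : ℕ) = (i : ℕ) + 1 then 1 else 0

/-- Determinant identity for the centered block: if each design point has first coordinate 1,
the weights are nonnegative and sum to 1, and `M(w)` is positive definite, then
`det(K M(w)⁻¹ Kᵀ) = 1/det M(w)`, equivalently
`log det(K M(w)⁻¹ Kᵀ) = −log det M(w)`. -/
theorem stmt_9 {n m : ℕ} (hm : 2 ≤ m) (hnm : m ≤ n)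
    (x : Fin n → Fin m → ℝ)
    (hx1 : ∀ i, x i ⟨0, by omega⟩ = 1)
    (w : Fin n → ℝ) (hw0 : ∀ i, 0 ≤ w i) (hw1 : ∑ i, w i = 1)
    (hM : (Mmat x w).PosDef) :
    (Kmat m * (Mmat x w)⁻¹ * (Kmat m)ᵀ).det = 1 / (Mmat x w).det ∧
      Real.log (Kmat m * (Mmat x w)⁻¹ * (Kmat m)ᵀ).det =
        -Real.log (Mmat x w).det := by
  have hm1 : 1 + (m - 1) = m := by omega
  set M := Mmat x w with hMdef
  have hMdet : 0 < M.det := hM.det_pos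
  haveI hMinv : Invertible M := hM.isUnit.invertible
  set e : Fin m ≃ Fin 1 ⊕ Fin (m - 1) :=
    (finCongr hm1.symm).trans finSumFinEquiv.symm with he
  -- value of e.symm on the right injection
  have hfr : ∀ i : Fin (m - 1), ((e.symm (Sum.inr i)) : ℕ) = 1 + (i : ℕ) := by
    intro i
    simp [he, finSumFinEquiv_apply_right]
  have hfl : e.symm (Sum.inl 0) = (⟨0, by omega⟩ : Fin m) := by
    apply Fin.ext
    simp [he]
  set N := M.submatrix e.symm e.symm with hN
  haveI hNinv : Invertible N := M.submatrixEquivInvertible e.symm e.symm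
  -- the top-left 1×1 block is the identity
  have hA : N.toBlocks₁₁ = 1 := by
    ext i j
    have hi : i = 0 := Subsingleton.elim _ _
    have hj : j = 0 := Subsingleton.elim _ _
    subst hi; subst hj
    have : N (Sum.inl 0) (Sum.inl 0) = 1 := by
      rw [hN, submatrix_apply, hfl, hMdef]
      simp only [Mmat, Matrix.sum_apply, Matrix.smul_apply, vecMulVec_apply, hx1, smul_eq_mul,
        mul_one]
      exact hw1
    simpa [Matrix.toBlocks₁₁, Matrix.one_apply] using this
  haveI hAinv : Invertible (N.toBlocks₁₁) := by rw [hA]; exact invertibleOne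
  have hfb : fromBlocks N.toBlocks₁₁ N.toBlocks₁₂ N.toBlocks₂₁ N.toBlocks₂₂ = N :=
    fromBlocks_toBlocks N
  haveI hFBinv : Invertible (fromBlocks N.toBlocks₁₁ N.toBlocks₁₂ N.toBlocks₂₁ N.toBlocks₂₂) :=
    hfb ▸ hNinv
  haveI hSinv : Invertible (N.toBlocks₂₂ - N.toBlocks₂₁ * ⅟(N.toBlocks₁₁) * N.toBlocks₁₂) :=
    invertibleOfFromBlocks₁₁Invertible _ _ _ _
  set S := N.toBlocks₂₂ - N.toBlocks₂₁ * ⅟(N.toBlocks₁₁) * N.toBlocks₁₂ with hS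
  -- the 22 block of N⁻¹ is ⅟S
  have hblock : N⁻¹.toBlocks₂₂ = ⅟S := by
    have h1 : N⁻¹ = ⅟(fromBlocks N.toBlocks₁₁ N.toBlocks₁₂ N.toBlocks₂₁ N.toBlocks₂₂) := by
      rw [invOf_eq_nonsing_inv, hfb]
    rw [h1, invOf_fromBlocks₁₁_eq, toBlocks_fromBlocks₂₂]
  -- determinant of N in terms of S
  have hdetN : N.det = S.det := by
    have hA1 : (N.toBlocks₁₁).det = 1 := by rw [hA, det_one]
    rw [← hfb, det_fromBlocks₁₁, hA1, one_mul]
  have hdetNM : N.det = M.det := det_submatrix_equiv_self e.symm M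
  -- identify K M⁻¹ Kᵀ with the 22 block of N⁻¹
  have hKMK : Kmat m * M⁻¹ * (Kmat m)ᵀ = N⁻¹.toBlocks₂₂ := by
    have hKmat : ∀ (i : Fin (m - 1)) (a : Fin m),
        Kmat m i a = if a = e.symm (Sum.inr i) then 1 else 0 := by
      intro i a
      have : ((a : ℕ) = (i : ℕ) + 1) ↔ (a = e.symm (Sum.inr i)) := by
        rw [Fin.ext_iff, hfr i]
        omega
      simp only [Kmat, of_apply]
      exact if_congr this rfl rfl
    ext i j
    rw [hN, inv_submatrix_equiv]
    simp only [Matrix.toBlocks₂₂, of_apply, submatrix_apply]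
    simp [Matrix.mul_apply, hKmat, transpose_apply, ite_mul, mul_ite, zero_mul, mul_zero]
  have hdet : (Kmat m * M⁻¹ * (Kmat m)ᵀ).det = 1 / M.det := by
    rw [hKMK, hblock, invOf_eq_nonsing_inv, det_nonsing_inv, ← hdetN, hdetNM,
      Ring.inverse_eq_inv', one_div]
  refine ⟨hdet, ?_⟩
  rw [hdet, one_div, Real.log_inv]
end

section
/- Rank obstruction lemma: assume m ≥ 3 and X has full rank m. There do not exist w, w' ∈ Ω with w_i ≠ w'_i for every i such that w_i(x_i − x̄) = w'_i(x_i − x̄') for all i = 1,…,n, where x̄ = Σ_j w_j x_j and x̄' = Σ_j w'_j x_j. (Equivalently, the matrix identity (Δ_w − Δ_{w'})X = (w, −w')(x̄, x̄')ᵀ is impossible, since the left side has rank m ≥ 3 while the right side has rank at most 2.) -/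
open Matrix Filter

/-- Rank obstruction lemma: if `m ≥ 3` and the design matrix has full rank `m`, then there
are no `w, w' ∈ Ω` with `w_i ≠ w'_i` for every `i` satisfying
`w_i (x_i − x̄) = w'_i (x_i − x̄')` for all `i`, where `x̄ = ∑ j, w_j x_j` and
`x̄' = ∑ j, w'_j x_j`. -/
theorem stmt_13 {n m : ℕ} (hm : 3 ≤ m) (hnm : m ≤ n)
    (x : Fin n → Fin m → ℝ) (hrank : (Matrix.of x).rank = m) :
    ¬ ∃ w w' : Fin n → ℝ,
      (∀ i, 0 < w i) ∧ (∑ i, w i = 1) ∧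
      (∀ i, 0 < w' i) ∧ (∑ i, w' i = 1) ∧
      (∀ i, w i ≠ w' i) ∧
      (∀ i, w i • (x i - ∑ j, w j • x j) = w' i • (x i - ∑ j, w' j • x j)) := by
  rintro ⟨w, w', -, -, -, -, hne, heq⟩
  set xb : Fin m → ℝ := ∑ j, w j • x j with hxb
  set xb' : Fin m → ℝ := ∑ j, w' j • x j with hxb'
  -- each x i lies in the span of {xb, xb'}
  have hmem : ∀ i, x i ∈ Submodule.span ℝ ({xb, xb'} : Set (Fin m → ℝ)) := by
    intro i
    have hd : w i - w' i ≠ 0 := sub_ne_zero.mpr (hne i)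
    have h1 : (w i - w' i) • x i = w i • xb - w' i • xb' := by
      have := heq i
      rw [smul_sub, smul_sub] at this
      rw [sub_smul]
      linear_combination (norm := module) this
    have : x i = (w i - w' i)⁻¹ • (w i • xb - w' i • xb') := by
      rw [← h1, smul_smul, inv_mul_cancel₀ hd, one_smul]
    rw [this]
    exact Submodule.smul_mem _ _ (Submodule.sub_mem _
      (Submodule.smul_mem _ _ (Submodule.subset_span (by simp)))
      (Submodule.smul_mem _ _ (Submodule.subset_span (by simp))))
  -- so the row span has dimension ≤ 2
  have hle : Submodule.span ℝ (Set.range x) ≤ Submodule.span ℝ ({xb, xb'} : Set (Fin m → ℝ)) := by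
    rw [Submodule.span_le]
    rintro _ ⟨i, rfl⟩
    exact hmem i
  have h2 : Module.finrank ℝ (Submodule.span ℝ ({xb, xb'} : Set (Fin m → ℝ))) ≤ 2 := by
    have := finrank_span_le_card (R := ℝ) ({xb, xb'} : Set (Fin m → ℝ))
    refine this.trans ?_
    simp [Set.toFinset_insert]
    exact Finset.card_insert_le _ _
  have h3 : Module.finrank ℝ (Submodule.span ℝ (Set.range x)) ≤ 2 :=
    le_trans (Submodule.finrank_mono hle) h2
  have h4 : (Matrix.of x).rank = Module.finrank ℝ (Submodule.span ℝ (Set.range x)) := by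
    rw [Matrix.rank_eq_finrank_span_row]
    rfl
  omega
end

section
/- Two-point counterexample in dimension m = 2: let n = m = 2, x_1 = (1, −1)ᵀ, x_2 = (1, 1)ᵀ, and fix 0 ≤ α < 2. Then for any w = (w_1, w_2) ∈ Ω, the map T_α(w)_i = w_i·(x_iᵀ M(w)^{-1} x_i − α)/(2 − α) satisfies T_α(w) = ((1 − α w_1)/(2 − α), (1 − α w_2)/(2 − α)). In particular, for α = 1 one has T_1(w_1, w_2) = (w_2, w_1), so for any starting point with w_1 ≠ w_2 the iterates of T_1 alternate between (w_1, w_2) and (w_2, w_1) and do not converge. -/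
open Matrix Filter

lemma Mmat_eq (w : Fin 2 → ℝ) :
    Mmat ![![1, -1], ![1, 1]] w = !![w 0 + w 1, w 1 - w 0; w 1 - w 0, w 0 + w 1] := by
  ext i j
  fin_cases i <;> fin_cases j <;>
    simp [Mmat, Fin.sum_univ_two, Matrix.vecMulVec_apply] <;> ring

lemma Minv_eq (w : Fin 2 → ℝ) (hsum : w 0 + w 1 = 1) (h0 : 0 < w 0) (h1 : 0 < w 1) :
    (Mmat ![![1, -1], ![1, 1]] w)⁻¹ =
      (4 * w 0 * w 1)⁻¹ • !![(1 : ℝ), w 0 - w 1; w 0 - w 1, 1] := by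
  have hne : (4 : ℝ) * w 0 * w 1 ≠ 0 := by positivity
  apply Matrix.inv_eq_right_inv
  rw [Mmat_eq]
  ext i j
  have h1' : w 1 = 1 - w 0 := by linarith
  fin_cases i <;> fin_cases j <;>
    simp [Matrix.mul_apply, Fin.sum_univ_two, Matrix.one_apply] <;>
    field_simp <;> nlinarith [sq_nonneg (w 0), sq_nonneg (w 1)]

lemma Talg_eq (α : ℝ) (hα2 : α < 2) (w : Fin 2 → ℝ) (hsum : w 0 + w 1 = 1)
    (h0 : 0 < w 0) (h1 : 0 < w 1) (i : Fin 2) :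
    Talg ![![1, -1], ![1, 1]] α w i = (1 - α * w i) / (2 - α) := by
  have h00 : w 0 ≠ 0 := ne_of_gt h0
  have h11 : w 1 ≠ 0 := ne_of_gt h1
  have hd : (2 : ℝ) - α ≠ 0 := by linarith
  rw [Talg, Minv_eq w hsum h0 h1]
  fin_cases i <;>
  · simp [Matrix.mulVec, dotProduct, Fin.sum_univ_two]
    have h1' : w 1 = 1 - w 0 := by linarith
    rw [div_eq_div_iff hd hd, h1']
    rw [h1'] at h11
    field_simp
    ring

lemma Talg_one (w : Fin 2 → ℝ) (hsum : w 0 + w 1 = 1) (h0 : 0 < w 0) (h1 : 0 < w 1) :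
    Talg ![![1, -1], ![1, 1]] 1 w = ![w 1, w 0] := by
  funext i
  fin_cases i <;>
  · rw [Talg_eq 1 (by norm_num) w hsum h0 h1]
    simp
    linarith

/-- Two-point counterexample in dimension `m = 2`: with `x₁ = (1,−1)ᵀ`, `x₂ = (1,1)ᵀ` and
`0 ≤ α < 2`, for any `w ∈ Ω` one has `T_α(w)_i = (1 − α wᵢ)/(2 − α)`.  In particular
`T_1(w₁, w₂) = (w₂, w₁)`, so for `w₁ ≠ w₂` the iterates of `T_1` alternate between
`(w₁, w₂)` and `(w₂, w₁)` and do not converge. -/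
theorem stmt_17 (α : ℝ) (hα0 : 0 ≤ α) (hα2 : α < 2)
    (x : Fin 2 → Fin 2 → ℝ) (hx : x = ![![1, -1], ![1, 1]])
    (w : Fin 2 → ℝ) (hsum : w 0 + w 1 = 1) (h0 : 0 < w 0) (h1 : 0 < w 1) :
    (∀ i, Talg x α w i = (1 - α * w i) / (2 - α)) ∧
      (Talg x 1 w 0 = w 1 ∧ Talg x 1 w 1 = w 0) ∧
      (w 0 ≠ w 1 →
        (∀ t : ℕ, (Talg x 1)^[2 * t] w = w ∧ (Talg x 1)^[2 * t + 1] w = ![w 1, w 0]) ∧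
        ¬ ∃ p : Fin 2 → ℝ, Tendsto (fun t => (Talg x 1)^[t] w) atTop (nhds p)) := by
  subst hx
  have hTw : Talg ![![1, -1], ![1, 1]] 1 w = ![w 1, w 0] := Talg_one w hsum h0 h1
  have hTw' : Talg ![![1, -1], ![1, 1]] 1 ![w 1, w 0] = w := by
    have := Talg_one ![w 1, w 0] (by simp; linarith) (by simpa using h1) (by simpa using h0)
    rw [this]
    funext i; fin_cases i <;> simp
  refine ⟨fun i => Talg_eq α hα2 w hsum h0 h1 i, ⟨?_, ?_⟩, fun hne => ⟨?_, ?_⟩⟩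
  · rw [hTw]; simp
  · rw [hTw]; simp
  · intro t
    induction t with
    | zero => simpa [Function.iterate_succ_apply'] using hTw
    | succ t ih =>
      have e1 : 2 * (t + 1) = (2 * t + 1) + 1 := by ring
      constructor
      · rw [e1, Function.iterate_succ_apply', ih.2, hTw']
      · rw [show 2 * (t + 1) + 1 = (2 * t + 1) + 1 + 1 by ring,
          Function.iterate_succ_apply', Function.iterate_succ_apply', ih.2, hTw', hTw]
  · rintro ⟨p, hp⟩
    have hiter : ∀ t : ℕ, (Talg ![![1, -1], ![1, 1]] 1)^[2 * t] w = w ∧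
        (Talg ![![1, -1], ![1, 1]] 1)^[2 * t + 1] w = ![w 1, w 0] := by
      intro t
      induction t with
      | zero => simpa [Function.iterate_succ_apply'] using hTw
      | succ t ih =>
        constructor
        · rw [show 2 * (t + 1) = (2 * t + 1) + 1 by ring,
            Function.iterate_succ_apply', ih.2, hTw']
        · rw [show 2 * (t + 1) + 1 = (2 * t + 1) + 1 + 1 by ring,
            Function.iterate_succ_apply', Function.iterate_succ_apply', ih.2, hTw', hTw]
    have h2 : Tendsto (fun t : ℕ => 2 * t) atTop atTop :=
      tendsto_atTop_atTop_of_monotone (fun a b h => by omega) (fun b => ⟨b, by omega⟩)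
    have h3 : Tendsto (fun t : ℕ => 2 * t + 1) atTop atTop :=
      tendsto_atTop_atTop_of_monotone (fun a b h => by omega) (fun b => ⟨b, by omega⟩)
    have he : Tendsto (fun t : ℕ => (Talg ![![1, -1], ![1, 1]] 1)^[2 * t] w) atTop (nhds p) :=
      hp.comp h2
    have ho : Tendsto (fun t : ℕ => (Talg ![![1, -1], ![1, 1]] 1)^[2 * t + 1] w) atTop (nhds p) :=
      hp.comp h3
    have he' : Tendsto (fun _ : ℕ => w) atTop (nhds p) :=
      he.congr (fun t => (hiter t).1)
    have ho' : Tendsto (fun _ : ℕ => ![w 1, w 0]) atTop (nhds p) :=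
      ho.congr (fun t => (hiter t).2)
    have hpw : p = w := tendsto_nhds_unique he' tendsto_const_nhds
    have hpw' : p = ![w 1, w 0] := tendsto_nhds_unique ho' tendsto_const_nhds
    have : w 0 = w 1 := by
      have := congrFun (hpw ▸ hpw') 0
      simpa using this
    exact ‹w 0 ≠ w 1› this
end

section
/- Interior optimality condition (Kiefer–Wolfowitz equivalence, interior case): assume X has full rank m and w* ∈ Ω (all coordinates positive) is a global maximizer of det M(w) over Ω̄. Then x_iᵀ M(w*)^{-1} x_i = m for every i = 1,…,n. -/
/-!
Move from `w*` towards the vertex `e_i` along `w_t = (1 - t) w* + t e_i`. Since every coordinate of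
`w*` is positive, `w_t` stays in the simplex for all `t` near `0`, so `t = 0` is a local maximum of
`t ↦ det M(w_t)`. By the matrix determinant lemma, with `c = x_iᵀ M(w*)⁻¹ x_i`,
`det M(w_t) = det M(w*) (1 - t)^(m-1) (1 + t (c - 1))`, whose derivative at `0` is
`det M(w*) (c - m)`. Full rank and positive weights make `M(w*)` positive definite, so
`det M(w*) ≠ 0` and hence `c = m`.
-/

open Matrix Filter

theorem Matrix.mulVec_injective_of_rank_eq_card {K m n : Type*} [Field K] [Fintype n]
    {A : Matrix m n K} (h : A.rank = Fintype.card n) : Function.Injective A.mulVec :=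
  mulVec_injective_iff.mpr <| linearIndependent_iff_card_eq_finrank_span.mpr <| by
    rw [← h, rank_eq_finrank_span_cols]; rfl

theorem Matrix.det_add_vecMulVec {K m : Type*} [Field K] [Fintype m] [DecidableEq m]
    {A : Matrix m m K} (hA : IsUnit A.det) (u v : m → K) :
    (A + vecMulVec u v).det = A.det * (1 + v ⬝ᵥ A⁻¹ *ᵥ u) := by
  rw [vecMulVec_eq Unit, det_add_replicateCol_mul_replicateRow hA]
  congr 1
  rw [det_unique]
  simp only [add_apply, one_apply_eq, mul_apply, replicateRow_apply, replicateCol_apply,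
    dotProduct, mulVec, Finset.sum_mul, Finset.mul_sum, mul_assoc, add_right_inj]
  exact Finset.sum_comm

theorem Matrix.det_sub_smul_add_smul_vecMulVec {K m : Type*} [Field K] [Fintype m]
    [DecidableEq m] [Nonempty m] {A : Matrix m m K} (hA : IsUnit A.det) (u : m → K) {t : K}
    (ht : t ≠ 1) :
    ((1 - t) • A + t • vecMulVec u u).det =
      A.det * ((1 - t) ^ (Fintype.card m - 1) * (1 + t * (u ⬝ᵥ A⁻¹ *ᵥ u - 1))) := by
  have h1t : 1 - t ≠ 0 := sub_ne_zero.mpr ht.symm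
  have hsplit : (1 - t) • A + t • vecMulVec u u =
      (1 - t) • (A + vecMulVec ((t / (1 - t)) • u) u) := by
    rw [smul_add, smul_vecMulVec, smul_smul, mul_div_cancel₀ _ h1t]
  have hpow : (1 - t) ^ Fintype.card m = (1 - t) ^ (Fintype.card m - 1) * (1 - t) := by
    rw [← pow_succ, Nat.sub_add_cancel Fintype.card_pos]
  rw [hsplit, det_smul, det_add_vecMulVec hA, mulVec_smul, dotProduct_smul, smul_eq_mul, hpow]
  field_simp
  ring

theorem hasDerivAt_one_sub_pow_mul_one_add_mul (k : ℕ) (a : ℝ) :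
    HasDerivAt (fun t : ℝ => (1 - t) ^ k * (1 + t * a)) (a - k) 0 := by
  have hsub : HasDerivAt (fun t : ℝ => 1 - t) (-1) 0 := (hasDerivAt_id' 0).const_sub 1
  have hadd : HasDerivAt (fun t : ℝ => 1 + t * a) a 0 := by
    simpa using ((hasDerivAt_id' 0).mul_const a).const_add 1
  exact ((hsub.fun_pow k).fun_mul hadd).congr_deriv (by simp [neg_add_eq_sub])

theorem sub_smul_add_smul_single_nonneg {ι : Type*} [DecidableEq ι] {w : ι → ℝ}
    (hw : ∀ j, 0 ≤ w j) {i : ι} (hwi : w i ≤ 1) {t : ℝ} (ht : t ∈ Set.Ioo (-w i) 1) (j : ι) :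
    0 ≤ ((1 - t) • w + t • Pi.single i 1 : ι → ℝ) j := by
  obtain ⟨ht₀, ht₁⟩ := ht
  rcases eq_or_ne j i with rfl | hj
  · simp only [Pi.add_apply, Pi.smul_apply, smul_eq_mul, Pi.single_eq_same]
    nlinarith [mul_le_mul_of_nonneg_right ht₀.le (sub_nonneg.2 hwi), sq_nonneg (w j)]
  · simp only [Pi.add_apply, Pi.smul_apply, smul_eq_mul, Pi.single_eq_of_ne hj, mul_zero,
      add_zero]
    exact mul_nonneg (by linarith) (hw j)

theorem sum_sub_smul_add_smul_single {ι : Type*} [Fintype ι] [DecidableEq ι] {w : ι → ℝ}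
    (hw : ∑ j, w j = 1) (i : ι) (t : ℝ) :
    ∑ j, ((1 - t) • w + t • Pi.single i 1 : ι → ℝ) j = 1 := by
  simp [Finset.sum_add_distrib, ← Finset.mul_sum, hw]

theorem Mmat_sub_smul_add_smul_single {n m : ℕ} (x : Fin n → Fin m → ℝ) (w : Fin n → ℝ)
    (i : Fin n) (t : ℝ) :
    Mmat x ((1 - t) • w + t • Pi.single i 1) =
      (1 - t) • Mmat x w + t • vecMulVec (x i) (x i) := by
  simp [Mmat, add_smul, mul_smul, Finset.sum_add_distrib, Finset.smul_sum, Pi.single_apply]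

theorem Mmat_eq_transpose_mul_diagonal_mul {n m : ℕ} (x : Fin n → Fin m → ℝ) (w : Fin n → ℝ) :
    Mmat x w = (of x)ᵀ * diagonal w * of x := by
  ext a b
  simp [Mmat, Matrix.sum_apply, mul_apply, vecMulVec_apply, diagonal, mul_comm, mul_left_comm]

theorem posDef_Mmat {n m : ℕ} {x : Fin n → Fin m → ℝ} {w : Fin n → ℝ} (hw : ∀ i, 0 < w i)
    (hx : Function.Injective (of x).mulVec) : (Mmat x w).PosDef := by
  rw [Mmat_eq_transpose_mul_diagonal_mul, ← conjTranspose_eq_transpose_of_trivial]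
  exact (PosDef.diagonal hw).conjTranspose_mul_mul_same hx

theorem stmt_18_general {n m : ℕ} (hm : 2 ≤ m)
    (x : Fin n → Fin m → ℝ) (hrank : (Matrix.of x).rank = m)
    (wstar : Fin n → ℝ) (hpos : ∀ i, 0 < wstar i) (hsum : ∑ i, wstar i = 1)
    (hopt : ∀ v : Fin n → ℝ, (∀ i, 0 ≤ v i) → ∑ i, v i = 1 →
      (Mmat x v).det ≤ (Mmat x wstar).det) :
    ∀ i, x i ⬝ᵥ (Mmat x wstar)⁻¹ *ᵥ x i = m := by
  intro i
  have : Nonempty (Fin m) := ⟨⟨0, by omega⟩⟩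
  have hdet : 0 < (Mmat x wstar).det :=
    (posDef_Mmat hpos (mulVec_injective_of_rank_eq_card (by simpa using hrank))).det_pos
  set c := x i ⬝ᵥ (Mmat x wstar)⁻¹ *ᵥ x i
  set w : ℝ → Fin n → ℝ := fun t => (1 - t) • wstar + t • Pi.single i 1
  have hwi : wstar i ≤ 1 :=
    hsum ▸ Finset.single_le_sum (fun j _ => (hpos j).le) (Finset.mem_univ i)
  have hloc : IsLocalMax (fun t => (Mmat x (w t)).det) 0 := by
    filter_upwards [Ioo_mem_nhds (neg_neg_of_pos (hpos i)) one_pos] with t ht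
    simpa [w] using hopt (w t) (sub_smul_add_smul_single_nonneg (fun j => (hpos j).le) hwi ht)
      (sum_sub_smul_add_smul_single hsum i t)
  have heq : (fun t => (Mmat x (w t)).det) =ᶠ[nhds 0]
      fun t => (Mmat x wstar).det * ((1 - t) ^ (m - 1) * (1 + t * (c - 1))) := by
    filter_upwards [eventually_ne_nhds zero_ne_one] with t ht
    rw [Mmat_sub_smul_add_smul_single, det_sub_smul_add_smul_vecMulVec hdet.ne'.isUnit _ ht,
      Fintype.card_fin]
  have hcrit := (hloc.congr heq).hasDerivAt_eq_zero
    ((hasDerivAt_one_sub_pow_mul_one_add_mul (m - 1) (c - 1)).const_mul (Mmat x wstar).det)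
  rw [mul_eq_zero, or_iff_right hdet.ne', Nat.cast_sub (by omega), Nat.cast_one] at hcrit
  linarith

/-- Interior optimality condition (Kiefer–Wolfowitz equivalence, interior case): if the
design matrix has full rank `m` and `w*`, with all coordinates positive and summing to 1,
is a global maximizer of `det M(w)` over the closed simplex, then
`x_iᵀ M(w*)⁻¹ x_i = m` for every `i`. -/
theorem stmt_18 {n m : ℕ} (hm : 2 ≤ m) (hnm : m ≤ n)
    (x : Fin n → Fin m → ℝ) (hrank : (Matrix.of x).rank = m)
    (wstar : Fin n → ℝ) (hpos : ∀ i, 0 < wstar i) (hsum : ∑ i, wstar i = 1)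
    (hopt : ∀ v : Fin n → ℝ, (∀ i, 0 ≤ v i) → ∑ i, v i = 1 →
      (Mmat x v).det ≤ (Mmat x wstar).det) :
    ∀ i, x i ⬝ᵥ (Mmat x wstar)⁻¹ *ᵥ x i = m :=
  stmt_18_general hm x hrank wstar hpos hsum hopt
end
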